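/- arXiv:1906.06650 — 6 statements merged into one kernel-verified Lean document; each statement's English description precedes it below -/
import Mathlib

section
/- Consider six complex numbers u1,…,u6 and parameters α1,…,α8 ∈ ℂ. Suppose N3(u4,u2,u1,u5;α1,α2,α3,α4) = 0, N3(u2,u6,u5,u3;α5,α6,α7,α8) = 0, and additionally α7·u6·u3 + α5·u6 + α8·u3 + α6 ≠ 0, α2·u1 + α3·u4 ≠ 0, and u2 ≠ 0. Then N3(u6,u4,u3,u1; α1α8−α3α5, α4α6−α2α7, α4α8−α2α5, α1α6−α3α7) = 0, i.e. the third quad-equation of the octahedron system follows from the first two (CAO property for the N3-N3-N3 system). -/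
/-- The multi-affine polynomial `N3(x,y,z,w;α1,α2,α3,α4) = α1·xy + α2·zw + α3·xw + α4·yz`. -/
noncomputable def N3poly (x y z w α1 α2 α3 α4 : ℂ) : ℂ :=
  α1 * x * y + α2 * z * w + α3 * x * w + α4 * y * z

/-- CAO property for the N3–N3–N3 octahedron system: the third quad-equation follows
from the first two under the stated non-degeneracy conditions. -/
theorem stmt9 (u1 u2 u3 u4 u5 u6 : ℂ) (α1 α2 α3 α4 α5 α6 α7 α8 : ℂ)
    (hQ1 : N3poly u4 u2 u1 u5 α1 α2 α3 α4 = 0)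
    (hQ2 : N3poly u2 u6 u5 u3 α5 α6 α7 α8 = 0)
    (hden1 : α7 * u6 * u3 + α5 * u6 + α8 * u3 + α6 ≠ 0)
    (hden2 : α2 * u1 + α3 * u4 ≠ 0)
    (hu2 : u2 ≠ 0) :
    N3poly u6 u4 u3 u1 (α1 * α8 - α3 * α5) (α4 * α6 - α2 * α7)
      (α4 * α8 - α2 * α5) (α1 * α6 - α3 * α7) = 0 := by
  unfold N3poly at *
  have h : u2 * ((α1 * α8 - α3 * α5) * u6 * u4 + (α4 * α6 - α2 * α7) * u3 * u1 +
      (α4 * α8 - α2 * α5) * u6 * u1 + (α1 * α6 - α3 * α7) * u4 * u3) = 0 := by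
    linear_combination (α6 * u3 + α8 * u6) * hQ1 - (α2 * u1 + α3 * u4) * hQ2
  exact (mul_eq_zero.mp h).resolve_left hu2
end

section
/- Consider six complex numbers u1,…,u6 and parameters α1,…,α8 ∈ ℂ. Suppose N1(u4,u2,u1,u5;α1,α2,α3,α4) = 0 and N1(u2,u6,u5,u3;α5,α6,α7,α8) = 0, and assume α7(u5+u2) + α5 ≠ 0 and α1(u1+u4) + α3 ≠ 0. Then N1(u6,u4,u3,u1; α2α5−α1α7, α4α5−α3α7, α2α6−α1α8, α4α6−α3α8) = 0. -/
/-- The polynomial `N1(x,y,z,w;α1,α2,α3,α4) = α1(x+z)(y+w) + α2(x+z) + α3(y+w) + α4`. -/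
noncomputable def N1poly (x y z w α1 α2 α3 α4 : ℂ) : ℂ :=
  α1 * (x + z) * (y + w) + α2 * (x + z) + α3 * (y + w) + α4

/-- CAO property for the N1–N1–N1 octahedron system. -/
theorem stmt10 (u1 u2 u3 u4 u5 u6 : ℂ) (α1 α2 α3 α4 α5 α6 α7 α8 : ℂ)
    (hQ1 : N1poly u4 u2 u1 u5 α1 α2 α3 α4 = 0)
    (hQ2 : N1poly u2 u6 u5 u3 α5 α6 α7 α8 = 0)
    (hden1 : α7 * (u5 + u2) + α5 ≠ 0)
    (hden2 : α1 * (u1 + u4) + α3 ≠ 0) :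
    N1poly u6 u4 u3 u1 (α2 * α5 - α1 * α7) (α4 * α5 - α3 * α7)
      (α2 * α6 - α1 * α8) (α4 * α6 - α3 * α8) = 0 := by
  unfold N1poly at *
  linear_combination (α5*(u6+u3)+α6)*hQ1 - (α1*(u1+u4)+α3)*hQ2
end

section
/- Let r(x,y) = (B1·xy + B2·x + B3·y + B4)/(B5·xy + B6·x + B7·y + B8) be a rational function with ∂r/∂x ≠ 0 and ∂r/∂y ≠ 0 (as rational functions). Then there exist Möbius transformations x ↦ (ax+b)/(cx+d), y ↦ (a'y+b')/(c'y+d') transforming r into one of the three canonical forms: r1(x,y) = (A1x+A2y)/(A3x+A4y) with A1A4 ≠ A2A3, r2(x,y) = 1/(x+y) + A, or r3(x,y) = x + y. -/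
/-- The rational function `r(x,y) = (B1·xy + B2·x + B3·y + B4)/(B5·xy + B6·x + B7·y + B8)`. -/
noncomputable def rq (B1 B2 B3 B4 B5 B6 B7 B8 x y : ℂ) : ℂ :=
  (B1 * x * y + B2 * x + B3 * y + B4) / (B5 * x * y + B6 * x + B7 * y + B8)

/-- The denominator `B5·xy + B6·x + B7·y + B8`. -/
noncomputable def denq (B5 B6 B7 B8 x y : ℂ) : ℂ :=
  B5 * x * y + B6 * x + B7 * y + B8

/-- A Möbius transformation `x ↦ (ax+b)/(cx+d)`. -/
noncomputable def mobius (a b c d x : ℂ) : ℂ := (a * x + b) / (c * x + d)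

/-!
Write `r = bform N / bform D`, where `N` and `D` are the `2 × 2` coefficient matrices of the
numerator and the denominator. Möbius substitutions `P` in `x` and `Q` in `y` act by
`(N, D) ↦ (Pᵀ N Q, Pᵀ D Q)`, so the problem is the classification of the pencil `N - w D` under
this action. Its singular members are the roots of
`det (N - w D) = det N - w · mixedDet N D + w² · det D`, and each of them has rank one.

* Two distinct roots (one of them possibly at infinity, when `det D = 0`) give two rank-one
  members `u₁ v₁ᵀ`, `u₂ v₂ᵀ` spanning the pencil. If `u₁ ∥ u₂` (or `v₁ ∥ v₂`), then `N` and `D`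
  share a linear factor in `x` (in `y`) and `r` does not depend on `x` (on `y`). Otherwise `P` and
  `Q` send the two members to the monomials `x` and `y`, which gives `r₁`.
* A double root `w` with `N - w D = u vᵀ` forces the other generator `L` of the pencil to be of
  the form `u gᵀ + f vᵀ`; sending `u vᵀ` to the monomial `1` and `L` to `x + y` gives `r₂` for a
  finite root and `r₃` for the root at infinity.
* If the quadratic vanishes identically, `N` and `D` are of rank one with a common factor, so `r`
  is again constant in one variable.
-/

open Matrix

section CommRing

variable {R : Type*} [CommRing R]

def bform (M : Matrix (Fin 2) (Fin 2) R) (x y : R) : R := ![x, 1] ⬝ᵥ M *ᵥ ![y, 1]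

lemma bform_apply (M : Matrix (Fin 2) (Fin 2) R) (x y : R) :
    bform M x y = M 0 0 * x * y + M 0 1 * x + M 1 0 * y + M 1 1 := by
  simp only [bform, vec2_dotProduct, mulVec, cons_val_zero, cons_val_one, cons_val_fin_one]
  ring

@[simp]
lemma bform_of (p q r s x y : R) :
    bform !![p, q; r, s] x y = p * x * y + q * x + r * y + s := by
  simp [bform_apply]

lemma bform_transpose (M : Matrix (Fin 2) (Fin 2) R) (x y : R) : bform Mᵀ x y = bform M y x := by
  simp only [bform_apply, transpose_apply]
  ring

lemma bform_smul (w : R) (M : Matrix (Fin 2) (Fin 2) R) (x y : R) :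
    bform (w • M) x y = w * bform M x y := by
  simp only [bform_apply, Matrix.smul_apply, smul_eq_mul]
  ring

lemma bform_vecMulVec (u v : Fin 2 → R) (x y : R) :
    bform (vecMulVec u v) x y = (![x, 1] ⬝ᵥ u) * (v ⬝ᵥ ![y, 1]) := by
  simp only [bform_apply, vecMulVec_apply, vec2_dotProduct, cons_val_zero, cons_val_one,
    cons_val_fin_one]
  ring

lemma bform_transpose_mul_mul (P M Q : Matrix (Fin 2) (Fin 2) R) (x y : R) :
    bform (Pᵀ * M * Q) x y = (P *ᵥ ![x, 1]) ⬝ᵥ M *ᵥ (Q *ᵥ ![y, 1]) := by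
  simp only [bform_apply, mul_apply, transpose_apply, Fin.sum_univ_two, vec2_dotProduct, mulVec,
    cons_val_zero, cons_val_one, cons_val_fin_one]
  ring

lemma mul_vecMulVec_mul_transpose (T T' : Matrix (Fin 2) (Fin 2) R) (u v : Fin 2 → R) :
    T * vecMulVec u v * T'ᵀ = vecMulVec (T *ᵥ u) (T' *ᵥ v) := by
  rw [mul_vecMulVec, vecMulVec_mul, vecMul_transpose]

lemma det_of_rows (u₁ u₂ : Fin 2 → R) : (of ![u₁, u₂]).det = u₁ 0 * u₂ 1 - u₁ 1 * u₂ 0 := by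
  simp [det_fin_two]

def mixedDet (A B : Matrix (Fin 2) (Fin 2) R) : R := (A + B).det - A.det - B.det

lemma mixedDet_eq (A B : Matrix (Fin 2) (Fin 2) R) :
    mixedDet A B = A 0 0 * B 1 1 + A 1 1 * B 0 0 - A 0 1 * B 1 0 - A 1 0 * B 0 1 := by
  simp only [mixedDet, det_fin_two, Matrix.add_apply]
  ring

lemma det_sub_smul (N D : Matrix (Fin 2) (Fin 2) R) (w : R) :
    (N - w • D).det = N.det - w * mixedDet N D + w ^ 2 * D.det := by
  simp only [mixedDet_eq, det_fin_two, Matrix.sub_apply, Matrix.smul_apply, smul_eq_mul]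
  ring

lemma mixedDet_sub_smul (N D : Matrix (Fin 2) (Fin 2) R) (w : R) :
    mixedDet D (N - w • D) = mixedDet N D - 2 * w * D.det := by
  simp only [mixedDet_eq, det_fin_two, Matrix.sub_apply, Matrix.smul_apply, smul_eq_mul]
  ring

lemma mixedDet_vecMulVec (u₁ v₁ u₂ v₂ : Fin 2 → R) :
    mixedDet (vecMulVec u₁ v₁) (vecMulVec u₂ v₂) = (of ![u₁, u₂]).det * (of ![v₁, v₂]).det := by
  simp only [mixedDet_eq, det_of_rows, vecMulVec_apply]
  ring

end CommRing

section Field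

variable {K : Type*} [Field K]

lemma exists_eq_vecMulVec_of_det_eq_zero {M : Matrix (Fin 2) (Fin 2) K} (h : M.det = 0) :
    ∃ u v : Fin 2 → K, M = vecMulVec u v := by
  rw [det_fin_two] at h
  by_cases h₀₀ : M 0 0 = 0
  · by_cases h₀₁ : M 0 1 = 0
    · refine ⟨![0, 1], M 1, ?_⟩
      ext i j; fin_cases i <;> fin_cases j <;> simp [vecMulVec_apply, h₀₀, h₀₁]
    · have h₁₀ : M 1 0 = 0 := by simpa [h₀₀, h₀₁] using h
      refine ⟨![M 0 1, M 1 1], ![0, 1], ?_⟩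
      ext i j; fin_cases i <;> fin_cases j <;> simp [vecMulVec_apply, h₀₀, h₁₀]
  · refine ⟨![1, M 1 0 / M 0 0], M 0, ?_⟩
    ext i j; fin_cases i <;> fin_cases j <;> simp [vecMulVec_apply] <;> field_simp
    linear_combination h

lemma exists_eq_smul_of_det_eq_zero {u w : Fin 2 → K} (hu : u ≠ 0) (h : (of ![u, w]).det = 0) :
    ∃ t : K, w = t • u := by
  rw [det_of_rows] at h
  by_cases h₀ : u 0 = 0
  · have h₁ : u 1 ≠ 0 := fun h₁ => hu (by ext i; fin_cases i <;> simp [h₀, h₁])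
    refine ⟨w 1 / u 1, ?_⟩
    ext i; fin_cases i <;> simp <;> field_simp
    linear_combination -h
  · refine ⟨w 0 / u 0, ?_⟩
    ext i; fin_cases i <;> simp <;> field_simp
    linear_combination h

lemma exists_mulVec_eq_single {u₁ u₂ : Fin 2 → K} (h : (of ![u₁, u₂]).det ≠ 0) :
    ∃ T : Matrix (Fin 2) (Fin 2) K, T.det ≠ 0 ∧ T *ᵥ u₁ = ![1, 0] ∧ T *ᵥ u₂ = ![0, 1] := by
  rw [det_of_rows] at h
  refine ⟨(u₁ 0 * u₂ 1 - u₁ 1 * u₂ 0)⁻¹ • !![u₂ 1, -u₂ 0; -u₁ 1, u₁ 0], ?_, ?_, ?_⟩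
  · rw [det_smul, det_fin_two_of]
    field_simp
    simpa [sub_eq_add_neg, mul_comm] using h
  all_goals
    ext i; fin_cases i <;> simp [vecHead, vecTail] <;> field_simp <;> ring

lemma exists_eq_vecMulVec_add_vecMulVec {L : Matrix (Fin 2) (Fin 2) K} {u v : Fin 2 → K}
    (hu : u ≠ 0) (hv : v ≠ 0) (h : mixedDet L (vecMulVec u v) = 0) :
    ∃ f g : Fin 2 → K, L = vecMulVec u g + vecMulVec f v := by
  simp only [mixedDet_eq, vecMulVec_apply] at h
  by_cases hv₀ : v 0 = 0
  · have hv₁ : v 1 ≠ 0 := fun hv₁ => hv (by ext i; fin_cases i <;> simp [hv₀, hv₁])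
    have h' : (u 0 * L 1 0 - u 1 * L 0 0) * v 1 = 0 := by rw [hv₀] at h; linear_combination -h
    obtain ⟨t, ht⟩ := exists_eq_smul_of_det_eq_zero (w := fun i => L i 0) hu
      (by simpa [det_of_rows, hv₁] using h')
    refine ⟨fun i => L i 1 / v 1, ![t, 0], ?_⟩
    ext i j; fin_cases j <;> simp [vecMulVec_apply, hv₀, hv₁, congrFun ht i, mul_comm]
  · obtain ⟨t, ht⟩ := exists_eq_smul_of_det_eq_zero (w := fun i => L i 1 * v 0 - L i 0 * v 1) hu
      (by rw [det_of_rows]; linear_combination h)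
    refine ⟨fun i => L i 0 / v 0, ![0, t / v 0], ?_⟩
    ext i j; fin_cases j <;> simp [vecMulVec_apply] <;> field_simp
    linear_combination (by simpa using congrFun ht i : L i 1 * v 0 - L i 0 * v 1 = t * u i)

def VariesInFst (N D : Matrix (Fin 2) (Fin 2) K) : Prop :=
  ∃ x₁ x₂ y, bform D x₁ y ≠ 0 ∧ bform D x₂ y ≠ 0 ∧
    bform N x₁ y / bform D x₁ y ≠ bform N x₂ y / bform D x₂ y

namespace VariesInFst

variable {N D : Matrix (Fin 2) (Fin 2) K}

lemma ne_smul (h : VariesInFst N D) (w : K) : N ≠ w • D := by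
  rintro rfl
  obtain ⟨x₁, x₂, y, h₁, h₂, hne⟩ := h
  simp [bform_smul, h₁, h₂] at hne

lemma ne_zero (h : VariesInFst N D) : D ≠ 0 := by
  rintro rfl
  obtain ⟨x₁, -, y, h₁, -⟩ := h
  simp [bform] at h₁

lemma not_eq_vecMulVec_and_eq_vecMulVec (h : VariesInFst N D) (u n d : Fin 2 → K) :
    ¬(N = vecMulVec u n ∧ D = vecMulVec u d) := by
  rintro ⟨rfl, rfl⟩
  obtain ⟨x₁, x₂, y, h₁, h₂, hne⟩ := h
  simp only [bform_vecMulVec] at h₁ h₂ hne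
  rw [mul_div_mul_left _ _ (left_ne_zero_of_mul h₁),
    mul_div_mul_left _ _ (left_ne_zero_of_mul h₂)] at hne
  exact hne rfl

lemma det_ne_zero (h : VariesInFst N D) {u₁ v₁ u₂ v₂ : Fin 2 → K} {a b c d : K}
    (hN : N = a • vecMulVec u₁ v₁ + b • vecMulVec u₂ v₂)
    (hD : D = c • vecMulVec u₁ v₁ + d • vecMulVec u₂ v₂) :
    (of ![u₁, u₂]).det ≠ 0 := by
  intro h₀
  subst hN hD
  rcases eq_or_ne u₁ 0 with rfl | hu
  · exact h.not_eq_vecMulVec_and_eq_vecMulVec u₂ (b • v₂) (d • v₂) (by simp)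
  · obtain ⟨t, rfl⟩ := exists_eq_smul_of_det_eq_zero hu h₀
    exact h.not_eq_vecMulVec_and_eq_vecMulVec u₁ (a • v₁ + (b * t) • v₂) (c • v₁ + (d * t) • v₂)
      (by simp [vecMulVec_add, smul_smul])

lemma det_ne_zero_of_mixedDet_eq_zero (hx : VariesInFst N D) (hy : VariesInFst Nᵀ Dᵀ)
    (hD : D.det = 0) (hND : mixedDet N D = 0) : N.det ≠ 0 := by
  intro hN
  obtain ⟨u₁, v₁, rfl⟩ := exists_eq_vecMulVec_of_det_eq_zero hN
  obtain ⟨u₂, v₂, rfl⟩ := exists_eq_vecMulVec_of_det_eq_zero hD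
  have hu := hx.det_ne_zero (a := 1) (b := 0) (c := 0) (d := 1)
    (by rw [one_smul, zero_smul, add_zero]) (by rw [zero_smul, one_smul, zero_add])
  have hv := hy.det_ne_zero (a := 1) (b := 0) (c := 0) (d := 1)
    (by rw [one_smul, zero_smul, add_zero, transpose_vecMulVec])
    (by rw [zero_smul, one_smul, zero_add, transpose_vecMulVec])
  rw [mixedDet_vecMulVec] at hND
  exact mul_ne_zero hu hv hND

end VariesInFst

/-- The coefficient matrices (see `bform_of`) of `r₁ = (A₁x + A₂y)/(A₃x + A₄y)`,
`r₂ = (1 + A(x + y))/(x + y)` and `r₃ = (x + y)/1`. -/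
def IsCanonicalPair (N D : Matrix (Fin 2) (Fin 2) K) : Prop :=
  (∃ A₁ A₂ A₃ A₄ : K, A₁ * A₄ ≠ A₂ * A₃ ∧ N = !![0, A₁; A₂, 0] ∧ D = !![0, A₃; A₄, 0]) ∨
  (∃ A : K, N = !![0, A; A, 1] ∧ D = !![0, 1; 1, 0]) ∨
  (N = !![0, 1; 1, 0] ∧ D = !![0, 0; 0, 1])

lemma exists_transform_eq_of_mixedDet_eq_zero {L M : Matrix (Fin 2) (Fin 2) K} (hL : L.det ≠ 0)
    (hM : M.det = 0) (hM₀ : M ≠ 0) (hLM : mixedDet L M = 0) :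
    ∃ P Q : Matrix (Fin 2) (Fin 2) K, P.det ≠ 0 ∧ Q.det ≠ 0 ∧
      Pᵀ * M * Q = !![0, 0; 0, 1] ∧ Pᵀ * L * Q = !![0, 1; 1, 0] := by
  obtain ⟨u, v, rfl⟩ := exists_eq_vecMulVec_of_det_eq_zero hM
  obtain ⟨hu, hv⟩ : u ≠ 0 ∧ v ≠ 0 := by simpa [not_or] using hM₀
  obtain ⟨f, g, rfl⟩ := exists_eq_vecMulVec_add_vecMulVec hu hv hLM
  have hdet : (vecMulVec u g + vecMulVec f v).det = -((of ![f, u]).det * (of ![g, v]).det) := by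
    rw [det_of_rows, det_of_rows, det_fin_two]
    simp only [Matrix.add_apply, vecMulVec_apply]
    ring
  rw [hdet, neg_ne_zero] at hL
  obtain ⟨T, hT, hTf, hTu⟩ := exists_mulVec_eq_single (left_ne_zero_of_mul hL)
  obtain ⟨T', hT', hT'g, hT'v⟩ := exists_mulVec_eq_single (right_ne_zero_of_mul hL)
  refine ⟨Tᵀ, T'ᵀ, by rwa [det_transpose], by rwa [det_transpose], ?_, ?_⟩
  · rw [transpose_transpose, mul_vecMulVec_mul_transpose, hTu, hT'v]
    ext i j; fin_cases i <;> fin_cases j <;> simp [vecMulVec_apply]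
  · rw [transpose_transpose, mul_add, add_mul, mul_vecMulVec_mul_transpose,
      mul_vecMulVec_mul_transpose, hTu, hT'g, hTf, hT'v]
    ext i j; fin_cases i <;> fin_cases j <;> simp

lemma exists_isCanonicalPair_of_det_eq_zero {N D : Matrix (Fin 2) (Fin 2) K}
    (hx : VariesInFst N D) (hy : VariesInFst Nᵀ Dᵀ) {p q r s : K} (hΔ : p * s - q * r ≠ 0)
    (h₁ : (p • N + q • D).det = 0) (h₂ : (r • N + s • D).det = 0) :
    ∃ P Q : Matrix (Fin 2) (Fin 2) K, P.det ≠ 0 ∧ Q.det ≠ 0 ∧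
      IsCanonicalPair (Pᵀ * N * Q) (Pᵀ * D * Q) := by
  obtain ⟨u₁, v₁, hM₁⟩ := exists_eq_vecMulVec_of_det_eq_zero h₁
  obtain ⟨u₂, v₂, hM₂⟩ := exists_eq_vecMulVec_of_det_eq_zero h₂
  set Δ := p * s - q * r
  have hN : N = (s / Δ) • vecMulVec u₁ v₁ + (-q / Δ) • vecMulVec u₂ v₂ := by
    rw [← hM₁, ← hM₂]; match_scalars <;> field_simp <;> ring
  have hD : D = (-r / Δ) • vecMulVec u₁ v₁ + (p / Δ) • vecMulVec u₂ v₂ := by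
    rw [← hM₁, ← hM₂]; match_scalars <;> field_simp <;> ring
  have hu := hx.det_ne_zero hN hD
  have hv := hy.det_ne_zero
    (by rw [hN]; simp : Nᵀ = (s / Δ) • vecMulVec v₁ u₁ + (-q / Δ) • vecMulVec v₂ u₂)
    (by rw [hD]; simp : Dᵀ = (-r / Δ) • vecMulVec v₁ u₁ + (p / Δ) • vecMulVec v₂ u₂)
  obtain ⟨T, hT, hTu₁, hTu₂⟩ := exists_mulVec_eq_single hu
  obtain ⟨T', hT', hT'v₂, hT'v₁⟩ := exists_mulVec_eq_single (u₁ := v₂) (u₂ := v₁)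
    (by rw [det_of_rows] at hv ⊢; contrapose! hv; linear_combination -hv)
  refine ⟨Tᵀ, T'ᵀ, by rwa [det_transpose], by rwa [det_transpose],
    Or.inl ⟨s / Δ, -q / Δ, -r / Δ, p / Δ, ?_, ?_, ?_⟩⟩
  · intro h
    apply hΔ
    field_simp at h
    linear_combination h
  · rw [hN]
    simp only [transpose_transpose, mul_add, add_mul, Matrix.mul_smul, Matrix.smul_mul,
      mul_vecMulVec_mul_transpose, hTu₁, hTu₂, hT'v₁, hT'v₂]
    ext i j; fin_cases i <;> fin_cases j <;> simp
  · rw [hD]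
    simp only [transpose_transpose, mul_add, add_mul, Matrix.mul_smul, Matrix.smul_mul,
      mul_vecMulVec_mul_transpose, hTu₁, hTu₂, hT'v₁, hT'v₂]
    ext i j; fin_cases i <;> fin_cases j <;> simp

section IsAlgClosed

variable [IsAlgClosed K]

lemma exists_det_sub_smul_eq_zero (N : Matrix (Fin 2) (Fin 2) K) {D : Matrix (Fin 2) (Fin 2) K}
    (hD : D.det ≠ 0) : ∃ w : K, (N - w • D).det = 0 := by
  open Polynomial in
  obtain ⟨w, hw⟩ := IsAlgClosed.exists_root (C D.det * X ^ 2 + C (-mixedDet N D) * X + C N.det)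
    (by rw [degree_quadratic hD]; decide)
  refine ⟨w, ?_⟩
  rw [det_sub_smul]
  simp only [IsRoot.def, eval_add, eval_mul, eval_pow, eval_C, eval_X] at hw
  linear_combination hw

theorem exists_isCanonicalPair {N D : Matrix (Fin 2) (Fin 2) K} (hx : VariesInFst N D)
    (hy : VariesInFst Nᵀ Dᵀ) :
    ∃ P Q : Matrix (Fin 2) (Fin 2) K, P.det ≠ 0 ∧ Q.det ≠ 0 ∧
      IsCanonicalPair (Pᵀ * N * Q) (Pᵀ * D * Q) := by
  rcases ne_or_eq D.det 0 with hD | hD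
  · obtain ⟨w, hw⟩ := exists_det_sub_smul_eq_zero N hD
    -- `w' := mixedDet N D / det D - w` is the other root, so `w` is double iff `w' = w`.
    by_cases hβ : mixedDet N D = 2 * w * D.det
    · obtain ⟨P, Q, hP, hQ, hM, hL⟩ := exists_transform_eq_of_mixedDet_eq_zero hD hw
        (sub_ne_zero.mpr (hx.ne_smul w)) (by rw [mixedDet_sub_smul, hβ, sub_self])
      refine ⟨P, Q, hP, hQ, Or.inr (Or.inl ⟨w, ?_, hL⟩)⟩
      rw [show N = (N - w • D) + w • D by abel, mul_add, add_mul, hM, Matrix.mul_smul,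
        Matrix.smul_mul, hL]
      ext i j; fin_cases i <;> fin_cases j <;> simp
    · set w' := mixedDet N D / D.det - w
      have hww' : (w + w') * D.det = mixedDet N D := by simp only [w']; field_simp; ring
      refine exists_isCanonicalPair_of_det_eq_zero hx hy (p := 1) (q := -w) (r := 1) (s := -w')
        ?_ (by simpa [sub_eq_add_neg] using hw) ?_
      · intro h
        apply hβ
        linear_combination -hww' - D.det * h
      · rw [one_smul, neg_smul, ← sub_eq_add_neg, det_sub_smul]
        rw [det_sub_smul] at hw
        linear_combination hw + (w' - w) * hww'
  · -- The root at infinity is double iff `mixedDet N D = 0`.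
    by_cases hβ : mixedDet N D = 0
    · obtain ⟨P, Q, hP, hQ, hM, hL⟩ := exists_transform_eq_of_mixedDet_eq_zero
        (VariesInFst.det_ne_zero_of_mixedDet_eq_zero hx hy hD hβ) hD hx.ne_zero hβ
      exact ⟨P, Q, hP, hQ, Or.inr (Or.inr ⟨hL, hM⟩)⟩
    · refine exists_isCanonicalPair_of_det_eq_zero hx hy (p := 1) (q := -(N.det / mixedDet N D))
        (r := 0) (s := 1) (by simp) ?_ (by simpa using hD)
      rw [one_smul, neg_smul, ← sub_eq_add_neg, det_sub_smul, hD]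
      field_simp
      ring

end IsAlgClosed

end Field

lemma bform_mobius (M P Q : Matrix (Fin 2) (Fin 2) ℂ) {x y : ℂ} (hx : P 1 0 * x + P 1 1 ≠ 0)
    (hy : Q 1 0 * y + Q 1 1 ≠ 0) :
    bform M (mobius (P 0 0) (P 0 1) (P 1 0) (P 1 1) x) (mobius (Q 0 0) (Q 0 1) (Q 1 0) (Q 1 1) y)
      * ((P 1 0 * x + P 1 1) * (Q 1 0 * y + Q 1 1)) = bform (Pᵀ * M * Q) x y := by
  have hX :
      P *ᵥ ![x, 1] = (P 1 0 * x + P 1 1) • ![mobius (P 0 0) (P 0 1) (P 1 0) (P 1 1) x, 1] := by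
    ext i; fin_cases i <;> simp [mobius, mulVec, vecHead, vecTail, mul_div_cancel₀ _ hx]
  have hY :
      Q *ᵥ ![y, 1] = (Q 1 0 * y + Q 1 1) • ![mobius (Q 0 0) (Q 0 1) (Q 1 0) (Q 1 1) y, 1] := by
    ext i; fin_cases i <;> simp [mobius, mulVec, vecHead, vecTail, mul_div_cancel₀ _ hy]
  rw [bform_transpose_mul_mul, hX, hY, mulVec_smul, dotProduct_smul, smul_dotProduct, bform,
    smul_eq_mul, smul_eq_mul]
  ring

lemma rq_mobius (B1 B2 B3 B4 B5 B6 B7 B8 : ℂ) (P Q : Matrix (Fin 2) (Fin 2) ℂ) {x y : ℂ}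
    (hx : P 1 0 * x + P 1 1 ≠ 0) (hy : Q 1 0 * y + Q 1 1 ≠ 0) :
    rq B1 B2 B3 B4 B5 B6 B7 B8 (mobius (P 0 0) (P 0 1) (P 1 0) (P 1 1) x)
        (mobius (Q 0 0) (Q 0 1) (Q 1 0) (Q 1 1) y) =
      bform (Pᵀ * !![B1, B2; B3, B4] * Q) x y / bform (Pᵀ * !![B5, B6; B7, B8] * Q) x y := by
  rw [← bform_mobius _ _ _ hx hy, ← bform_mobius _ _ _ hx hy,
    mul_div_mul_right _ _ (mul_ne_zero hx hy)]
  simp [rq]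

/-- Classification of the rational functions `r(x,y)` (nonconstant in each variable)
into the three canonical forms `r1`, `r2`, `r3` under Möbius transformations of `x` and `y`. -/
theorem stmt12 (B1 B2 B3 B4 B5 B6 B7 B8 : ℂ)
    (hx : ∃ x₁ x₂ y : ℂ, denq B5 B6 B7 B8 x₁ y ≠ 0 ∧ denq B5 B6 B7 B8 x₂ y ≠ 0 ∧
      rq B1 B2 B3 B4 B5 B6 B7 B8 x₁ y ≠ rq B1 B2 B3 B4 B5 B6 B7 B8 x₂ y)
    (hy : ∃ x y₁ y₂ : ℂ, denq B5 B6 B7 B8 x y₁ ≠ 0 ∧ denq B5 B6 B7 B8 x y₂ ≠ 0 ∧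
      rq B1 B2 B3 B4 B5 B6 B7 B8 x y₁ ≠ rq B1 B2 B3 B4 B5 B6 B7 B8 x y₂) :
    ∃ a b c d a' b' c' d' : ℂ, a * d - b * c ≠ 0 ∧ a' * d' - b' * c' ≠ 0 ∧
      ((∃ A1 A2 A3 A4 : ℂ, A1 * A4 ≠ A2 * A3 ∧
          ∀ x y : ℂ, c * x + d ≠ 0 → c' * y + d' ≠ 0 →
            denq B5 B6 B7 B8 (mobius a b c d x) (mobius a' b' c' d' y) ≠ 0 →
            A3 * x + A4 * y ≠ 0 →
            rq B1 B2 B3 B4 B5 B6 B7 B8 (mobius a b c d x) (mobius a' b' c' d' y)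
              = (A1 * x + A2 * y) / (A3 * x + A4 * y)) ∨
       (∃ A : ℂ,
          ∀ x y : ℂ, c * x + d ≠ 0 → c' * y + d' ≠ 0 →
            denq B5 B6 B7 B8 (mobius a b c d x) (mobius a' b' c' d' y) ≠ 0 →
            x + y ≠ 0 →
            rq B1 B2 B3 B4 B5 B6 B7 B8 (mobius a b c d x) (mobius a' b' c' d' y)
              = 1 / (x + y) + A) ∨
       (∀ x y : ℂ, c * x + d ≠ 0 → c' * y + d' ≠ 0 →
            denq B5 B6 B7 B8 (mobius a b c d x) (mobius a' b' c' d' y) ≠ 0 →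
            rq B1 B2 B3 B4 B5 B6 B7 B8 (mobius a b c d x) (mobius a' b' c' d' y)
              = x + y)) := by
  have hvx : VariesInFst !![B1, B2; B3, B4] !![B5, B6; B7, B8] := by
    simpa [VariesInFst, rq, denq] using hx
  have hvy : VariesInFst !![B1, B2; B3, B4]ᵀ !![B5, B6; B7, B8]ᵀ := by
    obtain ⟨x, y₁, y₂, h⟩ := hy
    exact ⟨y₁, y₂, x, by simpa [bform_transpose, rq, denq] using h⟩
  obtain ⟨P, Q, hP, hQ, hcan⟩ := exists_isCanonicalPair hvx hvy
  refine ⟨P 0 0, P 0 1, P 1 0, P 1 1, Q 0 0, Q 0 1, Q 1 0, Q 1 1, by rwa [← det_fin_two],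
    by rwa [← det_fin_two], ?_⟩
  rcases hcan with ⟨A1, A2, A3, A4, hA, hN, hD⟩ | ⟨A, hN, hD⟩ | ⟨hN, hD⟩
  · refine Or.inl ⟨A1, A2, A3, A4, hA, fun x y h₁ h₂ _ _ => ?_⟩
    rw [rq_mobius _ _ _ _ _ _ _ _ P Q h₁ h₂, hN, hD]
    simp
  · refine Or.inr (Or.inl ⟨A, fun x y h₁ h₂ _ h => ?_⟩)
    rw [rq_mobius _ _ _ _ _ _ _ _ P Q h₁ h₂, hN, hD]
    simp only [bform_of, zero_mul, one_mul, zero_add, add_zero]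
    field_simp
    ring
  · refine Or.inr (Or.inr fun x y h₁ h₂ _ => ?_)
    rw [rq_mobius _ _ _ _ _ _ _ _ P Q h₁ h₂, hN, hD]
    simp
end

section
/- Let u1, u4, v1 be complex numbers and let h1, h2, h3, h4 be complex numbers (depending on u1, u4 but not on v1). Define v4^(r) = −u4(u4·h1 + h2·v1)/(u4·h3 + h4·v1) and v4^(l) = −u1(u1·h4 + h2·v1)/(u1·h3 + h1·v1). Then v4^(r) = v4^(l) (for all v1 with nonvanishing denominators) if and only if (h4·u1 − h1·u4)·(h3·u1·u4 + (h4·u1 + h1·u4)·v1 + h2·v1²) = 0. In particular, if h4·u1 = h1·u4, then v4^(r) = v4^(l). -/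
/-- The core algebraic step of the CACO property (Type I case): the clockwise and
anti-clockwise evaluations of `v4` agree iff the stated factorized expression vanishes;
in particular they agree whenever `h4·u1 = h1·u4`. -/
theorem stmt14 (u1 u4 v1 h1 h2 h3 h4 : ℂ)
    (hd1 : u4 * h3 + h4 * v1 ≠ 0) (hd2 : u1 * h3 + h1 * v1 ≠ 0) :
    ((-(u4 * (u4 * h1 + h2 * v1)) / (u4 * h3 + h4 * v1)
        = -(u1 * (u1 * h4 + h2 * v1)) / (u1 * h3 + h1 * v1)) ↔
      (h4 * u1 - h1 * u4) *
        (h3 * u1 * u4 + (h4 * u1 + h1 * u4) * v1 + h2 * v1 ^ 2) = 0) ∧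
    (h4 * u1 = h1 * u4 →
      -(u4 * (u4 * h1 + h2 * v1)) / (u4 * h3 + h4 * v1)
        = -(u1 * (u1 * h4 + h2 * v1)) / (u1 * h3 + h1 * v1)) := by
  have h : (-(u4 * (u4 * h1 + h2 * v1)) / (u4 * h3 + h4 * v1)
        = -(u1 * (u1 * h4 + h2 * v1)) / (u1 * h3 + h1 * v1)) ↔
      (h4 * u1 - h1 * u4) *
        (h3 * u1 * u4 + (h4 * u1 + h1 * u4) * v1 + h2 * v1 ^ 2) = 0 := by
    rw [div_eq_div_iff hd1 hd2, ← sub_eq_zero]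
    constructor <;> intro h <;> linear_combination h
  exact ⟨h, fun he => h.2 (by rw [sub_eq_zero.2 he, zero_mul])⟩
end

section
/- For nonzero complex parameters α1,α2,α3,α4 with α1α2 ≠ α3α4, the multi-affine polynomial Q(x1,x2,x3,x4) = N3(x1,x2,x3,x4;α1,α2,α3,α4) = α1x1x2 + α2x3x4 + α3x1x4 + α4x2x3 has biquadratics h^{13}(x1,x3) = (α3x1+α2x3)(α1x1+α4x3), h^{24}(x2,x4) = (α4x2+α2x4)(α1x2+α3x4), h^{ij}(xi,xj) = (α1α2−α3α4)·xi·xj for i ∈ {1,3}, j ∈ {2,4} up to the stated constant, and discriminants r_k(x_k) proportional to x_k² for k = 1,2,3,4, where h^{ij} = (∂Q/∂x_k)(∂Q/∂x_l) − Q·∂²Q/∂x_k∂x_l with {k,l} the complement of {i,j} in {1,2,3,4}, and r_i = (∂h^{ij}/∂x_j)² − 2h^{ij}·∂²h^{ij}/∂x_j². -/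
open MvPolynomial

/-- `Q = N3(x1,x2,x3,x4;α1,α2,α3,α4) = α1·x1x2 + α2·x3x4 + α3·x1x4 + α4·x2x3`,
with `x1 = X 0, …, x4 = X 3`. -/
noncomputable def QN3 (α1 α2 α3 α4 : ℂ) : MvPolynomial (Fin 4) ℂ :=
  C α1 * X 0 * X 1 + C α2 * X 2 * X 3 + C α3 * X 0 * X 3 + C α4 * X 1 * X 2

/-- The biquadratic `h^{ij} = Q_{x_k} Q_{x_l} − Q·Q_{x_k x_l}` where `{k,l}` is the
complement of `{i,j}`; here it is given directly in terms of the pair `(k,l)`. -/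
noncomputable def biquad (Q : MvPolynomial (Fin 4) ℂ) (k l : Fin 4) :
    MvPolynomial (Fin 4) ℂ :=
  pderiv k Q * pderiv l Q - Q * pderiv k (pderiv l Q)

/-- The discriminant `r_i = (∂h/∂x_j)² − 2h·∂²h/∂x_j²` of a biquadratic `h`. -/
noncomputable def discrim4 (h : MvPolynomial (Fin 4) ℂ) (j : Fin 4) :
    MvPolynomial (Fin 4) ℂ :=
  (pderiv j h) ^ 2 - 2 * h * pderiv j (pderiv j h)


section aux
variable (α1 α2 α3 α4 : ℂ)

set_option maxHeartbeats 1000000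

lemma b13 : biquad (QN3 α1 α2 α3 α4) 1 3 =
    (C α3 * X 0 + C α2 * X 2) * (C α1 * X 0 + C α4 * X 2) := by
  simp [QN3, biquad, pderiv_mul, Pi.single_apply]; ring

lemma b02 : biquad (QN3 α1 α2 α3 α4) 0 2 =
    (C α4 * X 1 + C α2 * X 3) * (C α1 * X 1 + C α3 * X 3) := by
  simp [QN3, biquad, pderiv_mul, Pi.single_apply]; ring

lemma b23 : biquad (QN3 α1 α2 α3 α4) 2 3 = C (α3 * α4 - α1 * α2) * (X 0 * X 1) := by
  simp [QN3, biquad, pderiv_mul, Pi.single_apply, map_sub]; ring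

lemma b12 : biquad (QN3 α1 α2 α3 α4) 1 2 = C (α1 * α2 - α3 * α4) * (X 0 * X 3) := by
  simp [QN3, biquad, pderiv_mul, Pi.single_apply, map_sub]; ring

lemma b03 : biquad (QN3 α1 α2 α3 α4) 0 3 = C (α1 * α2 - α3 * α4) * (X 2 * X 1) := by
  simp [QN3, biquad, pderiv_mul, Pi.single_apply, map_sub]; ring

lemma b01 : biquad (QN3 α1 α2 α3 α4) 0 1 = C (α3 * α4 - α1 * α2) * (X 2 * X 3) := by
  simp [QN3, biquad, pderiv_mul, Pi.single_apply, map_sub]; ring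

lemma dXY (c : ℂ) (i j : Fin 4) (hij : i ≠ j) :
    discrim4 (C c * (X i * X j)) j = C (c ^ 2) * X i ^ 2 := by
  simp only [discrim4, map_mul, pderiv_C, pderiv_X, Pi.single_apply, zero_mul, zero_add,
    Derivation.leibniz, smul_eq_mul, if_neg hij, eq_self_iff_true, if_true, if_false,
    Derivation.map_one_eq_zero, mul_zero, mul_one, add_zero,
    map_zero, map_one, map_pow, zero_smul, one_smul, sub_zero]
  ring

end aux

/-- The biquadratics of `N3` (for nonzero parameters with `α1α2 ≠ α3α4`) have the stated
forms, each up to a nonzero constant factor, and the discriminants `r_k` are proportional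
to `x_k²`. -/
theorem stmt16 (α1 α2 α3 α4 : ℂ) (h1 : α1 ≠ 0) (h2 : α2 ≠ 0) (h3 : α3 ≠ 0) (h4 : α4 ≠ 0)
    (hne : α1 * α2 ≠ α3 * α4) :
    -- h^{13}
    (∃ c : ℂ, c ≠ 0 ∧ biquad (QN3 α1 α2 α3 α4) 1 3 =
      C c * ((C α3 * X 0 + C α2 * X 2) * (C α1 * X 0 + C α4 * X 2))) ∧
    -- h^{24}
    (∃ c : ℂ, c ≠ 0 ∧ biquad (QN3 α1 α2 α3 α4) 0 2 =
      C c * ((C α4 * X 1 + C α2 * X 3) * (C α1 * X 1 + C α3 * X 3))) ∧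
    -- h^{12}
    (∃ c : ℂ, c ≠ 0 ∧ biquad (QN3 α1 α2 α3 α4) 2 3 =
      C c * (C (α1 * α2 - α3 * α4) * X 0 * X 1)) ∧
    -- h^{14}
    (∃ c : ℂ, c ≠ 0 ∧ biquad (QN3 α1 α2 α3 α4) 1 2 =
      C c * (C (α1 * α2 - α3 * α4) * X 0 * X 3)) ∧
    -- h^{32}
    (∃ c : ℂ, c ≠ 0 ∧ biquad (QN3 α1 α2 α3 α4) 0 3 =
      C c * (C (α1 * α2 - α3 * α4) * X 2 * X 1)) ∧
    -- h^{34}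
    (∃ c : ℂ, c ≠ 0 ∧ biquad (QN3 α1 α2 α3 α4) 0 1 =
      C c * (C (α1 * α2 - α3 * α4) * X 2 * X 3)) ∧
    -- r_1
    (∃ c : ℂ, c ≠ 0 ∧ discrim4 (biquad (QN3 α1 α2 α3 α4) 2 3) 1 = C c * X 0 ^ 2) ∧
    -- r_2
    (∃ c : ℂ, c ≠ 0 ∧ discrim4 (biquad (QN3 α1 α2 α3 α4) 2 3) 0 = C c * X 1 ^ 2) ∧
    -- r_3
    (∃ c : ℂ, c ≠ 0 ∧ discrim4 (biquad (QN3 α1 α2 α3 α4) 0 1) 3 = C c * X 2 ^ 2) ∧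
    -- r_4
    (∃ c : ℂ, c ≠ 0 ∧ discrim4 (biquad (QN3 α1 α2 α3 α4) 0 1) 2 = C c * X 3 ^ 2) := by
  have hd : α3 * α4 - α1 * α2 ≠ 0 := sub_ne_zero.mpr (Ne.symm hne)
  refine ⟨⟨1, one_ne_zero, by rw [b13, map_one, one_mul]⟩, ⟨1, one_ne_zero, by rw [b02, map_one, one_mul]⟩,
    ⟨-1, by norm_num, by rw [b23]; simp only [map_sub, map_mul, map_neg, map_one]; ring⟩,
    ⟨1, one_ne_zero, by rw [b12, map_one, one_mul]; ring⟩,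
    ⟨1, one_ne_zero, by rw [b03, map_one, one_mul]; ring⟩,
    ⟨-1, by norm_num, by rw [b01]; simp only [map_sub, map_mul, map_neg, map_one]; ring⟩,
    ⟨(α3*α4-α1*α2)^2, pow_ne_zero _ hd, by rw [b23, dXY _ _ _ (by decide)]⟩,
    ⟨(α3*α4-α1*α2)^2, pow_ne_zero _ hd, by
      rw [b23, show (X 0 * X 1 : MvPolynomial (Fin 4) ℂ) = X 1 * X 0 from mul_comm _ _,
        dXY _ _ _ (by decide)]⟩,
    ⟨(α3*α4-α1*α2)^2, pow_ne_zero _ hd, by rw [b01, dXY _ _ _ (by decide)]⟩,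
    ⟨(α3*α4-α1*α2)^2, pow_ne_zero _ hd, by
      rw [b01, show (X 2 * X 3 : MvPolynomial (Fin 4) ℂ) = X 3 * X 2 from mul_comm _ _,
        dXY _ _ _ (by decide)]⟩⟩
end

section
/- Consider the octahedron equations with Q1 = D3(u4,u2,u1,u5) = u2 + u4·u1 + u4·u5 + u1·u5 and a generic multi-affine Q2(u2,u6,u5,u3) written as q1 + u5·q2 + u2·q3 + u2·u5·q4 where q1,q2,q3,q4 are affine polynomials in (u6,u3). If, after eliminating u5 from Q1 = 0 and Q2 = 0, the resulting quadratic C⁽⁰⁾ + C⁽¹⁾u2 + C⁽²⁾u2² in u2 has C⁽²⁾ ≡ 0 and C⁽⁰⁾ + u1²·C⁽¹⁾ ≡ 0 identically in u1, u4, u6, u3, then q4 = 0 and q1 = q2·u1 − q3·u1² for all u1, hence q1 = q2 = q3 = 0; that is, Q2 must be reducible or degenerate, so the CAO property fails for Q1 = D3. -/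
/-- The affine-in-each-variable polynomial `q(x,y;a,b,c,d) = axy + bx + cy + d`. -/
noncomputable def qaf (a b c d x y : ℂ) : ℂ := a * x * y + b * x + c * y + d

/-- Failure of the CAO property for `Q1 = D3`: if the elimination coefficients satisfy
`C⁽²⁾ ≡ 0` and `C⁽⁰⁾ + u1²·C⁽¹⁾ ≡ 0` identically, then `q4 = 0`,
`q1 = q2·u1 − q3·u1²` for all `u1`, and hence `q1 = q2 = q3 = 0`. -/
theorem stmt18
    (a1 b1 c1 e1 a2 b2 c2 e2 a3 b3 c3 e3 a4 b4 c4 e4 : ℂ)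
    (hC2 : ∀ u1 u4 u6 u3 : ℂ, -(qaf a4 b4 c4 e4 u6 u3) = 0)
    (hC01 : ∀ u1 u4 u6 u3 : ℂ,
      ((u1 + u4) * qaf a1 b1 c1 e1 u6 u3 - u1 * u4 * qaf a2 b2 c2 e2 u6 u3)
      + u1 ^ 2 * (-(qaf a2 b2 c2 e2 u6 u3) + (u1 + u4) * qaf a3 b3 c3 e3 u6 u3
          - u1 * u4 * qaf a4 b4 c4 e4 u6 u3) = 0) :
    (∀ u6 u3 : ℂ, qaf a4 b4 c4 e4 u6 u3 = 0) ∧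
    (∀ u1 u6 u3 : ℂ, qaf a1 b1 c1 e1 u6 u3
      = qaf a2 b2 c2 e2 u6 u3 * u1 - qaf a3 b3 c3 e3 u6 u3 * u1 ^ 2) ∧
    (∀ u6 u3 : ℂ, qaf a1 b1 c1 e1 u6 u3 = 0 ∧ qaf a2 b2 c2 e2 u6 u3 = 0 ∧
      qaf a3 b3 c3 e3 u6 u3 = 0) := by
  have key : ∀ u6 u3 : ℂ, qaf a1 b1 c1 e1 u6 u3 = 0 ∧ qaf a2 b2 c2 e2 u6 u3 = 0 ∧
      qaf a3 b3 c3 e3 u6 u3 = 0 := by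
    intro u6 u3
    have hQ4 : qaf a4 b4 c4 e4 u6 u3 = 0 := neg_eq_zero.mp (hC2 0 0 u6 u3)
    have h1 := hC01 0 1 u6 u3
    have h2 := hC01 1 0 u6 u3
    have h3 := hC01 (-1) 0 u6 u3
    have hA : qaf a1 b1 c1 e1 u6 u3 = 0 := by linear_combination h1
    have hB : qaf a2 b2 c2 e2 u6 u3 = 0 := by
      linear_combination (-1/2 : ℂ) * h2 + (-1/2 : ℂ) * h3
    have hC : qaf a3 b3 c3 e3 u6 u3 = 0 := by
      linear_combination (1/2 : ℂ) * h2 + (-1/2 : ℂ) * h3 - hA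
    exact ⟨hA, hB, hC⟩
  refine ⟨fun u6 u3 => neg_eq_zero.mp (hC2 0 0 u6 u3), ?_, key⟩
  intro u1 u6 u3
  obtain ⟨hA, hB, hC⟩ := key u6 u3
  rw [hA, hB, hC]; ring
end
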